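/- arXiv:math/0703389 — 2 statements merged into one kernel-verified Lean document; each statement's English description precedes it below -/
import Mathlib

section
/- Let 𝔤 be a finite-dimensional real Lie algebra with an ad-invariant inner product, let X ∈ 𝔤, and let f : ℝ → 𝔤 be a twice continuously differentiable solution of f''(t) = (1/4)⁅X, ⁅X, f(t)⁆⁆. Then f is bounded in norm on [0, ∞) if and only if the orthogonal projection of f'(0) onto the kernel of ad_X is zero (i.e. f'(0) is orthogonal to every w ∈ 𝔤 with ⁅X, w⁆ = 0). -/
open scoped RealInnerProductSpace

/-! Split `f = g + h` with `g` the projection of `f` onto `K = ker A` and `h` the projection onto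
`Kᗮ`. Since `A` is skew, the range of `A` is orthogonal to `K`, so `g'' = 0` and `g` is affine
with slope the projection of `f'(0)` onto `K`. The energy `‖f'‖² + a‖A f‖²` is conserved, so
`A f = A h` is bounded, and since `A` is injective on the finite-dimensional space `Kᗮ`, so is
`h`. Hence `f` is bounded on `[0, ∞)` exactly when the slope of `g` vanishes. -/

section

variable {E : Type*} [NormedAddCommGroup E] [InnerProductSpace ℝ E]

theorem LinearMap.apply_mem_ker_orthogonal_of_skew {A : E →ₗ[ℝ] E}
    (hA : ∀ u v, ⟪A u, v⟫ = -⟪u, A v⟫) (v : E) : A v ∈ (LinearMap.ker A)ᗮ := by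
  intro u hu
  rw [real_inner_comm, hA, LinearMap.mem_ker.1 hu, inner_zero_right, neg_zero]

theorem LinearMap.exists_norm_starProjection_ker_orthogonal_le [FiniteDimensional ℝ E]
    {F : Type*} [NormedAddCommGroup F] [NormedSpace ℝ F] (T : E →ₗ[ℝ] F) :
    ∃ C ≥ 0, ∀ v, ‖(LinearMap.ker T)ᗮ.starProjection v‖ ≤ C * ‖T v‖ := by
  set K := LinearMap.ker T
  have hinj : LinearMap.ker (T ∘ₗ Kᗮ.subtype) = ⊥ := by
    rw [LinearMap.ker_comp, ← Submodule.disjoint_iff_comap_eq_bot]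
    exact K.orthogonal_disjoint.symm
  obtain ⟨C, -, hC⟩ := (T ∘ₗ Kᗮ.subtype).exists_antilipschitzWith hinj
  refine ⟨C, C.2, fun v => ?_⟩
  have hTv : T (K.starProjection v) = 0 := K.starProjection_apply_mem v
  simpa [hTv] using ZeroHomClass.bound_of_antilipschitz _ hC (Kᗮ.orthogonalProjectionOnto v)

theorem norm_sq_deriv_add_mul_norm_sq_skew_eq {A : E →L[ℝ] E}
    (hA : ∀ u v, ⟪A u, v⟫ = -⟪u, A v⟫) {a : ℝ} {f f' : ℝ → E}
    (hf : ∀ t, HasDerivAt f (f' t) t) (hf' : ∀ t, HasDerivAt f' (a • A (A (f t))) t) (t : ℝ) :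
    ‖f' t‖ ^ 2 + a * ‖A (f t)‖ ^ 2 = ‖f' 0‖ ^ 2 + a * ‖A (f 0)‖ ^ 2 := by
  have hE : ∀ s, HasDerivAt (fun s => ‖f' s‖ ^ 2 + a * ‖A (f s)‖ ^ 2) 0 s := by
    intro s
    have hAf : HasDerivAt (fun s => A (f s)) (A (f' s)) s :=
      A.hasFDerivAt.comp_hasDerivAt s (hf s)
    have hsum := (hf' s).norm_sq.add (hAf.norm_sq.const_mul a)
    rw [real_inner_comm (A (f' s)), hA, inner_smul_right,
      show ∀ x : ℝ, 2 * (a * x) + a * (2 * -x) = 0 from fun x => by ring] at hsum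
    exact hsum
  exact is_const_of_deriv_eq_zero (fun s => (hE s).differentiableAt) (fun s => (hE s).deriv) t 0

theorem exists_norm_skew_apply_le {A : E →L[ℝ] E}
    (hA : ∀ u v, ⟪A u, v⟫ = -⟪u, A v⟫) {a : ℝ} (ha : 0 < a) {f f' : ℝ → E}
    (hf : ∀ t, HasDerivAt f (f' t) t) (hf' : ∀ t, HasDerivAt f' (a • A (A (f t))) t) :
    ∃ M, ∀ t, ‖A (f t)‖ ≤ M := by
  refine ⟨√((‖f' 0‖ ^ 2 + a * ‖A (f 0)‖ ^ 2) / a), fun t => Real.le_sqrt_of_sq_le ?_⟩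
  rw [le_div_iff₀' ha, ← norm_sq_deriv_add_mul_norm_sq_skew_eq hA hf hf' t]
  nlinarith [sq_nonneg ‖f' t‖]

variable {F : Type*} [NormedAddCommGroup F] [NormedSpace ℝ F]

theorem eq_add_smul_of_hasDerivAt_zero {g g' : ℝ → F} (hg : ∀ t, HasDerivAt g (g' t) t)
    (hg' : ∀ t, HasDerivAt g' 0 t) (t : ℝ) : g t = g 0 + t • g' 0 := by
  have hconst : ∀ s, g' s = g' 0 := fun s =>
    is_const_of_deriv_eq_zero (fun s => (hg' s).differentiableAt) (fun s => (hg' s).deriv) s 0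
  have hlin : ∀ s, HasDerivAt (fun s => g s - s • g' 0) 0 s := fun s => by
    have h := (hg s).sub ((hasDerivAt_id' s).smul_const (g' 0))
    rwa [hconst s, one_smul, sub_self] at h
  have := is_const_of_deriv_eq_zero (fun s => (hlin s).differentiableAt)
    (fun s => (hlin s).deriv) t 0
  simp only [zero_smul, sub_zero] at this
  rw [← this, sub_add_cancel]

theorem eq_zero_of_norm_add_smul_le {b c : F} {C : ℝ} (h : ∀ t : ℝ, 0 ≤ t → ‖b + t • c‖ ≤ C) :
    c = 0 := by
  by_contra hc
  have hc' : 0 < ‖c‖ := norm_pos_iff.2 hc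
  set t := (C + ‖b‖ + 1) / ‖c‖
  have ht : 0 ≤ t :=
    div_nonneg (by linarith [norm_nonneg b, (norm_nonneg _).trans (h 0 le_rfl)]) hc'.le
  have : t * ‖c‖ ≤ C + ‖b‖ := by
    calc t * ‖c‖ = ‖t • c‖ := by rw [norm_smul, Real.norm_of_nonneg ht]
      _ ≤ ‖b + t • c‖ + ‖b‖ := norm_le_add_norm_add' ..
      _ ≤ C + ‖b‖ := by gcongr; exact h t ht
  rw [div_mul_cancel₀ _ hc'.ne'] at this
  linarith

theorem bounded_iff_mem_ker_orthogonal_of_skew [FiniteDimensional ℝ E] {A : E →ₗ[ℝ] E}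
    (hA : ∀ u v, ⟪A u, v⟫ = -⟪u, A v⟫) {a : ℝ} (ha : 0 < a) {f f' : ℝ → E}
    (hf : ∀ t, HasDerivAt f (f' t) t) (hf' : ∀ t, HasDerivAt f' (a • A (A (f t))) t) :
    (∃ C, ∀ t, 0 ≤ t → ‖f t‖ ≤ C) ↔ f' 0 ∈ (LinearMap.ker A)ᗮ := by
  set K := LinearMap.ker A
  have hPA : ∀ v, K.starProjection (A v) = 0 := fun v =>
    K.starProjection_apply_eq_zero_iff.2 (A.apply_mem_ker_orthogonal_of_skew hA v)
  have hg_affine : ∀ t, K.starProjection (f t) =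
      K.starProjection (f 0) + t • K.starProjection (f' 0) := by
    have hP : ∀ {φ : ℝ → E} {φ' : E} {t : ℝ}, HasDerivAt φ φ' t →
        HasDerivAt (fun t => K.starProjection (φ t)) (K.starProjection φ') t := fun h =>
      K.starProjection.hasFDerivAt.comp_hasDerivAt _ h
    refine eq_add_smul_of_hasDerivAt_zero (fun t => hP (hf t)) fun t => ?_
    simpa only [map_smul, hPA, smul_zero] using hP (hf' t)
  obtain ⟨M, hM⟩ : ∃ M, ∀ t, ‖Kᗮ.starProjection (f t)‖ ≤ M := by
    obtain ⟨C, hC0, hC⟩ := A.exists_norm_starProjection_ker_orthogonal_le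
    obtain ⟨N, hN⟩ := exists_norm_skew_apply_le (A := A.toContinuousLinearMap) hA ha hf hf'
    exact ⟨C * N, fun t => (hC (f t)).trans (by gcongr; exact hN t)⟩
  rw [← K.starProjection_apply_eq_zero_iff]
  constructor
  · rintro ⟨C, hC⟩
    refine eq_zero_of_norm_add_smul_le (b := K.starProjection (f 0)) (C := C) fun t ht => ?_
    rw [← hg_affine]
    exact (K.norm_starProjection_apply_le _).trans (hC t ht)
  · intro h0
    refine ⟨‖K.starProjection (f 0)‖ + M, fun t _ => ?_⟩
    calc ‖f t‖ = ‖K.starProjection (f t) + Kᗮ.starProjection (f t)‖ := by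
          rw [K.starProjection_add_starProjection_orthogonal]
      _ ≤ ‖K.starProjection (f 0)‖ + M := by
          rw [hg_affine, h0, smul_zero, add_zero]
          exact (norm_add_le _ _).trans (by gcongr; exact hM t)

end

theorem jacobi_bounded_iff_proj_deriv_zero_general
    {𝕘 : Type*} [NormedAddCommGroup 𝕘] [InnerProductSpace ℝ 𝕘] [FiniteDimensional ℝ 𝕘]
    (bracket : 𝕘 →ₗ[ℝ] 𝕘 →ₗ[ℝ] 𝕘)
    (ad_invariant : ∀ Z X Y : 𝕘, ⟪bracket Z X, Y⟫ + ⟪X, bracket Z Y⟫ = 0)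
    (X : 𝕘) (f : ℝ → 𝕘)
    (hf : ContDiff ℝ 2 f)
    (hJacobi : ∀ t : ℝ, deriv (deriv f) t = (1/4 : ℝ) • bracket X (bracket X (f t))) :
    (∃ C : ℝ, ∀ t : ℝ, 0 ≤ t → ‖f t‖ ≤ C) ↔
      Submodule.orthogonalProjection (LinearMap.ker (bracket X)) (deriv f 0) = 0 := by
  have hskew : ∀ u v, ⟪bracket X u, v⟫ = -⟪u, bracket X v⟫ := fun u v =>
    eq_neg_of_add_eq_zero_left (ad_invariant X u v)
  have hf' : ContDiff ℝ 1 (deriv f) := (contDiff_succ_iff_deriv.1 hf).2.2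
  rw [Submodule.orthogonalProjectionOnto_eq_zero_iff]
  refine bounded_iff_mem_ker_orthogonal_of_skew hskew (by norm_num : (0 : ℝ) < 1 / 4)
    (fun t => ((hf.differentiable (by norm_num)) t).hasDerivAt) fun t => ?_
  rw [← hJacobi]
  exact ((hf'.differentiable one_ne_zero) t).hasDerivAt

/-- Let `𝕘` be a finite-dimensional real Lie algebra with an
ad-invariant inner product, `X ∈ 𝕘`, and `f : ℝ → 𝕘` a `C²` solution of
`f'' t = (1/4) ⁅X, ⁅X, f t⁆⁆`.  Then `f` is bounded in norm on `[0, ∞)` iff the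
orthogonal projection of `f' 0` onto `ker (ad_X)` vanishes. -/
theorem jacobi_bounded_iff_proj_deriv_zero
    {𝕘 : Type*} [NormedAddCommGroup 𝕘] [InnerProductSpace ℝ 𝕘] [FiniteDimensional ℝ 𝕘]
    (bracket : 𝕘 →ₗ[ℝ] 𝕘 →ₗ[ℝ] 𝕘)
    (bracket_alt : ∀ x : 𝕘, bracket x x = 0)
    (bracket_jacobi : ∀ x y z : 𝕘,
      bracket x (bracket y z) + bracket y (bracket z x) + bracket z (bracket x y) = 0)
    (ad_invariant : ∀ Z X Y : 𝕘, ⟪bracket Z X, Y⟫ + ⟪X, bracket Z Y⟫ = 0)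
    (X : 𝕘) (f : ℝ → 𝕘)
    (hf : ContDiff ℝ 2 f)
    (hJacobi : ∀ t : ℝ, deriv (deriv f) t = (1/4 : ℝ) • bracket X (bracket X (f t))) :
    (∃ C : ℝ, ∀ t : ℝ, 0 ≤ t → ‖f t‖ ≤ C) ↔
      Submodule.orthogonalProjection (LinearMap.ker (bracket X)) (deriv f 0) = 0 :=
  jacobi_bounded_iff_proj_deriv_zero_general bracket ad_invariant X f hf hJacobi
end

section
/- Let 𝔤 be a finite-dimensional real Lie algebra with an ad-invariant inner product, let X ∈ 𝔤, and let f : ℝ → 𝔤 be a twice continuously differentiable solution of f''(t) = (1/4)⁅X, ⁅X, f(t)⁆⁆ that is bounded in norm on [0, ∞). If w ∈ 𝔤 satisfies ⁅X, w⁆ = 0 and ⟪f(0), w⟫ = 0, then ⟪f(t), w⟫ = 0 for all t ∈ ℝ. -/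
open scoped RealInnerProductSpace

/-!
The function `g t = ⟪f t, w⟫` has `g'' t = ¼ ⟪⁅X, ⁅X, f t⁆⁆, w⟫ = -¼ ⟪⁅X, f t⁆, ⁅X, w⁆⟫ = 0`
by ad-invariance, so `g` is affine. It is bounded on `[0, ∞)` by `C ‖w‖` (Cauchy–Schwarz),
so its slope vanishes, and `g 0 = 0` gives `g = 0`.
-/

theorem inner_apply_left_eq_zero_of_apply_eq_zero {E : Type*} [NormedAddCommGroup E]
    [InnerProductSpace ℝ E] {A : E → E} (hA : ∀ x y, ⟪A x, y⟫ + ⟪x, A y⟫ = 0) {w : E}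
    (hw : A w = 0) (v : E) : ⟪A v, w⟫ = 0 := by
  simpa [hw] using hA v w

theorem eq_zero_of_forall_nonneg_abs_mul_le {c M : ℝ} (h : ∀ t, 0 ≤ t → |c * t| ≤ M) :
    c = 0 := by
  by_contra hc
  have hc' : 0 < |c| := abs_pos.mpr hc
  have key := h ((|M| + 1) / |c|) (by positivity)
  rw [abs_mul, abs_div, abs_abs, abs_of_pos (by positivity : 0 < |M| + 1),
    mul_div_cancel₀ _ hc'.ne'] at key
  linarith [le_abs_self M]

section SecondDerivativeZero

variable {g g' : ℝ → ℝ} (hg : ∀ t, HasDerivAt g (g' t) t) (hg' : ∀ t, HasDerivAt g' 0 t)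
include hg hg'

theorem eq_add_mul_of_hasDerivAt_of_hasDerivAt_zero (t : ℝ) : g t = g 0 + g' 0 * t := by
  have hslope : ∀ s, g' s = g' 0 := fun s =>
    is_const_of_deriv_eq_zero (fun s => (hg' s).differentiableAt) (fun s => (hg' s).deriv) s 0
  have hline : ∀ s, HasDerivAt (fun s => g s - g' 0 * s) 0 s := fun s => by
    have h := (hg s).sub ((hasDerivAt_id' s).const_mul (g' 0))
    rwa [hslope s, mul_one, sub_self] at h
  have hconst := is_const_of_deriv_eq_zero (fun s => (hline s).differentiableAt)
    (fun s => (hline s).deriv) t 0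
  simp only [mul_zero, sub_zero] at hconst
  linarith

theorem eq_apply_zero_of_hasDerivAt_zero_of_bounded
    (hbdd : ∃ M, ∀ t, 0 ≤ t → |g t| ≤ M) (t : ℝ) : g t = g 0 := by
  obtain ⟨M, hM⟩ := hbdd
  have hslope : g' 0 = 0 := eq_zero_of_forall_nonneg_abs_mul_le (M := M + |g 0|) fun s hs => by
    rw [← add_sub_cancel_left (g 0) (g' 0 * s),
      ← eq_add_mul_of_hasDerivAt_of_hasDerivAt_zero hg hg']
    exact (abs_sub _ _).trans (by linarith [hM s hs])
  simpa [hslope] using eq_add_mul_of_hasDerivAt_of_hasDerivAt_zero hg hg' t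

end SecondDerivativeZero

theorem jacobi_bounded_stays_orthogonal_general
    {𝕘 : Type*} [NormedAddCommGroup 𝕘] [InnerProductSpace ℝ 𝕘]
    (bracket : 𝕘 →ₗ[ℝ] 𝕘 →ₗ[ℝ] 𝕘)
    (ad_invariant : ∀ Z X Y : 𝕘, ⟪bracket Z X, Y⟫ + ⟪X, bracket Z Y⟫ = 0)
    (X : 𝕘) (f : ℝ → 𝕘)
    (hf : ContDiff ℝ 2 f)
    (hJacobi : ∀ t : ℝ, deriv (deriv f) t = (1/4 : ℝ) • bracket X (bracket X (f t)))
    (hbounded : ∃ C : ℝ, ∀ t : ℝ, 0 ≤ t → ‖f t‖ ≤ C)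
    (w : 𝕘) (hw : bracket X w = 0) (h0 : ⟪f 0, w⟫ = 0) :
    ∀ t : ℝ, ⟪f t, w⟫ = 0 := by
  have hg : ∀ t, HasDerivAt (fun t => ⟪f t, w⟫) ⟪deriv f t, w⟫ t := fun t => by
    simpa using ((hf.differentiable two_ne_zero t).hasDerivAt.inner ℝ (hasDerivAt_const t w))
  have hg' : ∀ t, HasDerivAt (fun t => ⟪deriv f t, w⟫) 0 t := fun t => by
    have hzero : ⟪deriv (deriv f) t, w⟫ = 0 := by
      rw [hJacobi, real_inner_smul_left,
        inner_apply_left_eq_zero_of_apply_eq_zero (ad_invariant X) hw, mul_zero]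
    simpa [hzero] using (hf.differentiable_deriv_two t).hasDerivAt.inner ℝ (hasDerivAt_const t w)
  have hbdd : ∃ M, ∀ t, 0 ≤ t → |⟪f t, w⟫| ≤ M := by
    obtain ⟨C, hC⟩ := hbounded
    exact ⟨C * ‖w‖, fun t ht => (abs_real_inner_le_norm (f t) w).trans
      (mul_le_mul_of_nonneg_right (hC t ht) (norm_nonneg w))⟩
  intro t
  rw [eq_apply_zero_of_hasDerivAt_zero_of_bounded hg hg' hbdd t, h0]

/-- Let `𝕘` be a finite-dimensional real Lie algebra with an
ad-invariant inner product, `X ∈ 𝕘`, and `f : ℝ → 𝕘` a `C²` solution of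
`f'' t = (1/4) ⁅X, ⁅X, f t⁆⁆` that is bounded in norm on `[0, ∞)`.  If `⁅X, w⁆ = 0`
and `⟪f 0, w⟫ = 0`, then `⟪f t, w⟫ = 0` for all `t`. -/
theorem jacobi_bounded_stays_orthogonal
    {𝕘 : Type*} [NormedAddCommGroup 𝕘] [InnerProductSpace ℝ 𝕘] [FiniteDimensional ℝ 𝕘]
    (bracket : 𝕘 →ₗ[ℝ] 𝕘 →ₗ[ℝ] 𝕘)
    (bracket_alt : ∀ x : 𝕘, bracket x x = 0)
    (bracket_jacobi : ∀ x y z : 𝕘,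
      bracket x (bracket y z) + bracket y (bracket z x) + bracket z (bracket x y) = 0)
    (ad_invariant : ∀ Z X Y : 𝕘, ⟪bracket Z X, Y⟫ + ⟪X, bracket Z Y⟫ = 0)
    (X : 𝕘) (f : ℝ → 𝕘)
    (hf : ContDiff ℝ 2 f)
    (hJacobi : ∀ t : ℝ, deriv (deriv f) t = (1/4 : ℝ) • bracket X (bracket X (f t)))
    (hbounded : ∃ C : ℝ, ∀ t : ℝ, 0 ≤ t → ‖f t‖ ≤ C)
    (w : 𝕘) (hw : bracket X w = 0) (h0 : ⟪f 0, w⟫ = 0) :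
    ∀ t : ℝ, ⟪f t, w⟫ = 0 :=
  jacobi_bounded_stays_orthogonal_general bracket ad_invariant X f hf hJacobi hbounded w hw h0
end
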